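/- Let Z_1, …, Z_b be mutually independent random variables and f_1, …, f_b deterministic functions on their respective ranges. For any a ≤ b, letting A_a denote the collection of all subsets of [b] of size a, we have min_{A ∈ A_a} H(f_A(Z_A)) ≤ (a/b) · H(f_{[b]}(Z_{[b]})). -/

import Mathlib

open Finset

open scoped Classical in
/-- Probability that the random variable `X` takes the value `s`, under the
probability mass function `p` on the finite sample space `Ω`. -/
noncomputable def prEq {Ω : Type*} [Fintype Ω] {S : Type*} (p : Ω → ℝ) (X : Ω → S) (s : S) : ℝ :=
  ∑ ω, if X ω = s then p ω else 0

/-- Shannon entropy `H(X)` of the random variable `X` under the pmf `p`. -/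
noncomputable def entropy {Ω : Type*} [Fintype Ω] {S : Type*} (p : Ω → ℝ) (X : Ω → S) : ℝ :=
  -∑ ω, p ω * Real.log (prEq p X (X ω))

/-- Conditional entropy `H(X | Y) = H(X, Y) - H(Y)`. -/
noncomputable def condEntropy {Ω : Type*} [Fintype Ω] {S T : Type*}
    (p : Ω → ℝ) (X : Ω → S) (Y : Ω → T) : ℝ :=
  entropy p (fun ω => (X ω, Y ω)) - entropy p Y

/-- Conditional mutual information `I(X ; Y | Z) = H(X|Z) + H(Y|Z) - H(X,Y|Z)`. -/
noncomputable def condMI {Ω : Type*} [Fintype Ω] {S T U : Type*}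
    (p : Ω → ℝ) (X : Ω → S) (Y : Ω → T) (Z : Ω → U) : ℝ :=
  condEntropy p X Z + condEntropy p Y Z - condEntropy p (fun ω => (X ω, Y ω)) Z

/-- The tuple of random variables `(Z i)_{i ∈ A}`, as a single random variable. -/
def tupleOn {Ω : Type*} {ι : Type*} {S : ι → Type*}
    (Z : (i : ι) → Ω → S i) (A : Finset ι) (ω : Ω) :
    ∀ i : {x : ι // x ∈ A}, S i.1 := fun i => Z i.1 ω

/-!
Write `W_i = f_i(Z_i)`. The total correlation `Σ_{i ∈ A} H(W_i) - H(W_A)` is built up, one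
coordinate at a time, as a sum of mutual informations `I(W_j ; W_A)`, each of which can only
shrink under coordinatewise maps (data processing). Hence the total correlation of `W` is
nonnegative and at most that of `Z`, which vanishes by independence: `H(W_A) ≤ Σ_{i ∈ A} H(W_i)`
and `Σ_i H(W_i) ≤ H(W_{[b]})`. Finally, repeatedly discarding the largest term from `[b]` leaves
an `a`-subset `A` with `Σ_{i ∈ A} H(W_i) ≤ (a/b) Σ_i H(W_i)`.
-/

namespace Finset

variable {ι : Type*}

theorem exists_mem_sum_le_card_mul {A : Finset ι} (hA : A.Nonempty) (h : ι → ℝ) :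
    ∃ j ∈ A, ∑ i ∈ A, h i ≤ #A * h j := by
  obtain ⟨j, hj, hmax⟩ := A.exists_max_image h hA
  exact ⟨j, hj, by simpa using A.sum_le_card_nsmul h (h j) hmax⟩

variable [DecidableEq ι]

theorem exists_mem_powersetCard_card_mul_sum_le (s : Finset ι) (h : ι → ℝ) {a : ℕ}
    (ha : a ≤ #s) : ∃ A ∈ s.powersetCard a, (#s : ℝ) * ∑ i ∈ A, h i ≤ a * ∑ i ∈ s, h i := by
  induction ha using Nat.decreasingInduction with
  | self => exact ⟨s, by simp [powersetCard_self], le_rfl⟩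
  | of_succ k hk ih =>
    obtain ⟨A, hA, hsum⟩ := ih
    obtain ⟨hAs, hAcard⟩ := mem_powersetCard.1 hA
    obtain ⟨j, hj, hmax⟩ := exists_mem_sum_le_card_mul (A := A) (card_pos.1 (by omega)) h
    refine ⟨A.erase j, mem_powersetCard.2 ⟨(erase_subset j A).trans hAs, ?_⟩, ?_⟩
    · simp [card_erase_of_mem hj, hAcard]
    · rw [hAcard] at hmax
      push_cast at hsum hmax
      rw [sum_erase_eq_sub hj]
      have hs : (0 : ℝ) ≤ #s := Nat.cast_nonneg _
      nlinarith [mul_le_mul_of_nonneg_left hmax hs]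

theorem exists_mem_powersetCard_sum_le (s : Finset ι) (h : ι → ℝ) {a : ℕ} (ha : a ≤ #s) :
    ∃ A ∈ s.powersetCard a, ∑ i ∈ A, h i ≤ a / #s * ∑ i ∈ s, h i := by
  obtain ⟨A, hA, hsum⟩ := s.exists_mem_powersetCard_card_mul_sum_le h ha
  refine ⟨A, hA, ?_⟩
  rcases (#s).eq_zero_or_pos with hs | hs
  · obtain rfl := card_eq_zero.1 hs
    simp_all
  · rwa [div_mul_eq_mul_div, le_div_iff₀ (by positivity), mul_comm]

end Finset

section Entropy

open scoped Classical

variable {Ω : Type*} [Fintype Ω] {p : Ω → ℝ} {S T U : Type*}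

theorem prEq_nonneg (hp0 : ∀ ω, 0 ≤ p ω) (X : Ω → S) (s : S) : 0 ≤ prEq p X s :=
  Finset.sum_nonneg fun ω _ => by split_ifs <;> simp [hp0 ω]

theorem prEq_self_pos (hp0 : ∀ ω, 0 ≤ p ω) (X : Ω → S) {ω : Ω} (hω : 0 < p ω) :
    0 < prEq p X (X ω) :=
  hω.trans_le <| by
    simpa [prEq] using Finset.single_le_sum (f := fun ω' => if X ω' = X ω then p ω' else 0)
      (fun ω' _ => by split_ifs <;> simp [hp0 ω']) (Finset.mem_univ ω)

theorem sum_image_prEq_mul (p : Ω → ℝ) (X : Ω → S) (F : S → ℝ) :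
    ∑ s ∈ Finset.univ.image X, prEq p X s * F s = ∑ ω, p ω * F (X ω) := by
  simp_rw [prEq, Finset.sum_mul, ite_mul, zero_mul]
  rw [Finset.sum_comm]
  refine Finset.sum_congr rfl fun ω _ => ?_
  rw [Finset.sum_ite_eq (Finset.univ.image X) (X ω) (fun s => p ω * F s)]
  simp

theorem sum_image_prEq (hp1 : ∑ ω, p ω = 1) (X : Ω → S) :
    ∑ s ∈ Finset.univ.image X, prEq p X s = 1 := by
  simpa [hp1] using sum_image_prEq_mul p X fun _ => 1

theorem sum_image_prEq_pair_right (p : Ω → ℝ) (X : Ω → S) (Y : Ω → T) (x : S) :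
    ∑ y ∈ Finset.univ.image Y, prEq p (fun ω => (X ω, Y ω)) (x, y) = prEq p X x := by
  simp_rw [prEq, Prod.mk.injEq, ite_and]
  rw [Finset.sum_comm]
  refine Finset.sum_congr rfl fun ω _ => ?_
  by_cases hx : X ω = x <;> simp [hx]

theorem entropy_congr {X : Ω → S} {Y : Ω → T} (h : ∀ ω ω', X ω = X ω' ↔ Y ω = Y ω') :
    entropy p X = entropy p Y := by
  simp_rw [entropy, prEq, h]

theorem entropy_eq_zero_of_forall_eq (hp1 : ∑ ω, p ω = 1) {X : Ω → S}
    (h : ∀ ω ω', X ω = X ω') : entropy p X = 0 := by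
  have hprEq : ∀ ω, prEq p X (X ω) = 1 := fun ω =>
    (Finset.sum_congr rfl fun ω' _ => if_pos (h ω' ω)).trans hp1
  simp [entropy, hprEq]

/-- Gibbs' inequality. -/
theorem entropy_le_neg_sum_mul_log (hp0 : ∀ ω, 0 ≤ p ω) (hp1 : ∑ ω, p ω = 1) (X : Ω → S)
    (q : S → ℝ) (F : Finset S) (hXF : ∀ ω, X ω ∈ F) (hq0 : ∀ s, 0 ≤ q s)
    (hqpos : ∀ ω, 0 < p ω → 0 < q (X ω)) (hqF : ∑ s ∈ F, q s ≤ 1) :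
    entropy p X ≤ -∑ ω, p ω * Real.log (q (X ω)) := by
  have hpoint : ∀ ω, p ω * Real.log (q (X ω)) - p ω * Real.log (prEq p X (X ω))
      ≤ p ω * (q (X ω) / prEq p X (X ω)) - p ω := by
    intro ω
    rcases (hp0 ω).eq_or_lt with h | h
    · simp [← h]
    have hP := prEq_self_pos hp0 X h
    rw [← mul_sub, ← Real.log_div (hqpos ω h).ne' hP.ne', ← mul_sub_one]
    exact mul_le_mul_of_nonneg_left (Real.log_le_sub_one_of_pos (div_pos (hqpos ω h) hP)) h.le
  have hratio : ∑ ω, p ω * (q (X ω) / prEq p X (X ω)) ≤ 1 :=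
    calc ∑ ω, p ω * (q (X ω) / prEq p X (X ω))
        = ∑ s ∈ Finset.univ.image X, prEq p X s * (q s / prEq p X s) :=
          (sum_image_prEq_mul p X fun s => q s / prEq p X s).symm
      _ ≤ ∑ s ∈ Finset.univ.image X, q s := Finset.sum_le_sum fun s _ => by
          rcases (prEq_nonneg hp0 X s).eq_or_lt with h | h
          · simp [← h, hq0 s]
          · rw [mul_div_cancel₀ _ h.ne']
      _ ≤ ∑ s ∈ F, q s := Finset.sum_le_sum_of_subset_of_nonneg
          (Finset.image_subset_iff.2 fun ω _ => hXF ω) fun s _ _ => hq0 s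
      _ ≤ 1 := hqF
  have := Finset.sum_le_sum fun ω (_ : ω ∈ Finset.univ) => hpoint ω
  rw [Finset.sum_sub_distrib, Finset.sum_sub_distrib, hp1] at this
  unfold entropy
  linarith

end Entropy

section MutualInfo

open scoped Classical

variable {Ω : Type*} [Fintype Ω] {p : Ω → ℝ} {S T U V : Type*}

noncomputable def mutualInfo (p : Ω → ℝ) (X : Ω → S) (Y : Ω → T) : ℝ :=
  entropy p X + entropy p Y - entropy p (fun ω => (X ω, Y ω))

theorem mutualInfo_comm (X : Ω → S) (Y : Ω → T) : mutualInfo p X Y = mutualInfo p Y X := by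
  rw [mutualInfo, mutualInfo,
    entropy_congr (X := fun ω => (X ω, Y ω)) (Y := fun ω => (Y ω, X ω)) (by simp [and_comm])]
  ring

/-- Data processing: Gibbs' inequality compares the law of `(X, Y)` with
`P(x) P(g x, y) / P(g x)`. -/
theorem mutualInfo_comp_left_le (hp0 : ∀ ω, 0 ≤ p ω) (hp1 : ∑ ω, p ω = 1) (X : Ω → S)
    (Y : Ω → T) (g : S → U) : mutualInfo p (fun ω => g (X ω)) Y ≤ mutualInfo p X Y := by
  set P := prEq p X
  set Q := prEq p (fun ω => (g (X ω), Y ω))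
  set R := prEq p (fun ω => g (X ω))
  have hsum : ∑ v ∈ Finset.univ.image X ×ˢ Finset.univ.image Y, P v.1 * Q (g v.1, v.2) / R (g v.1)
      ≤ 1 := by
    rw [Finset.sum_product, ← sum_image_prEq hp1 X]
    refine Finset.sum_le_sum fun x _ => ?_
    dsimp only
    rw [← Finset.sum_div, ← Finset.mul_sum, sum_image_prEq_pair_right, mul_div_assoc]
    exact mul_le_of_le_one_right (prEq_nonneg hp0 X x) (div_self_le_one _)
  have hG := entropy_le_neg_sum_mul_log hp0 hp1 (fun ω => (X ω, Y ω))
    (fun v => P v.1 * Q (g v.1, v.2) / R (g v.1)) _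
    (fun ω => Finset.mem_product.2 ⟨Finset.mem_image_of_mem X (Finset.mem_univ ω),
      Finset.mem_image_of_mem Y (Finset.mem_univ ω)⟩)
    (fun v => div_nonneg (mul_nonneg (prEq_nonneg hp0 _ _) (prEq_nonneg hp0 _ _))
      (prEq_nonneg hp0 _ _))
    (fun ω h => div_pos (mul_pos (prEq_self_pos hp0 X h) (prEq_self_pos hp0 _ h))
      (prEq_self_pos hp0 _ h))
    hsum
  have hlog : ∀ ω, p ω * Real.log (P (X ω) * Q (g (X ω), Y ω) / R (g (X ω)))
      = p ω * Real.log (P (X ω)) + p ω * Real.log (Q (g (X ω), Y ω))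
        - p ω * Real.log (R (g (X ω))) := by
    intro ω
    rcases (hp0 ω).eq_or_lt with h | h
    · simp [← h]
    rw [Real.log_div (mul_pos (prEq_self_pos hp0 X h) (prEq_self_pos hp0 _ h)).ne'
      (prEq_self_pos hp0 _ h).ne', Real.log_mul (prEq_self_pos hp0 X h).ne'
      (prEq_self_pos hp0 _ h).ne']
    ring
  simp only [hlog, Finset.sum_add_distrib, Finset.sum_sub_distrib, P, Q, R] at hG
  unfold mutualInfo entropy at *
  linarith

theorem mutualInfo_comp_le (hp0 : ∀ ω, 0 ≤ p ω) (hp1 : ∑ ω, p ω = 1) (X : Ω → S)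
    (Y : Ω → T) (g : S → U) (h : T → V) :
    mutualInfo p (fun ω => g (X ω)) (fun ω => h (Y ω)) ≤ mutualInfo p X Y :=
  calc mutualInfo p (fun ω => g (X ω)) (fun ω => h (Y ω))
      ≤ mutualInfo p X (fun ω => h (Y ω)) := mutualInfo_comp_left_le hp0 hp1 X _ g
    _ = mutualInfo p (fun ω => h (Y ω)) X := mutualInfo_comm _ _
    _ ≤ mutualInfo p Y X := mutualInfo_comp_left_le hp0 hp1 Y X h
    _ = mutualInfo p X Y := mutualInfo_comm _ _

theorem mutualInfo_nonneg (hp0 : ∀ ω, 0 ≤ p ω) (hp1 : ∑ ω, p ω = 1) (X : Ω → S)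
    (Y : Ω → T) : 0 ≤ mutualInfo p X Y := by
  have hconst : mutualInfo p (fun _ => ()) Y = 0 := by
    rw [mutualInfo, entropy_eq_zero_of_forall_eq hp1 fun _ _ => rfl,
      entropy_congr (X := fun ω => ((), Y ω)) (Y := Y) (by simp)]
    ring
  exact hconst ▸ mutualInfo_comp_left_le hp0 hp1 X Y fun _ => ()

end MutualInfo

section TotalCorrelation

variable {Ω : Type*} [Fintype Ω] {p : Ω → ℝ} {ι : Type*} {S T : ι → Type*}

noncomputable def totalCorrelation (p : Ω → ℝ) (Z : (i : ι) → Ω → S i) (A : Finset ι) : ℝ :=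
  ∑ i ∈ A, entropy p (Z i) - entropy p (tupleOn Z A)

theorem totalCorrelation_empty (hp1 : ∑ ω, p ω = 1) (Z : (i : ι) → Ω → S i) :
    totalCorrelation p Z ∅ = 0 := by
  rw [totalCorrelation, Finset.sum_empty,
    entropy_eq_zero_of_forall_eq hp1 fun _ _ => funext fun i => absurd i.2 (Finset.notMem_empty _)]
  ring

variable [DecidableEq ι]

theorem entropy_tupleOn_insert (Z : (i : ι) → Ω → S i) (A : Finset ι) (j : ι) :
    entropy p (tupleOn Z (insert j A)) = entropy p (fun ω => (Z j ω, tupleOn Z A ω)) :=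
  entropy_congr fun ω ω' => by simp [tupleOn, funext_iff]

theorem totalCorrelation_insert (Z : (i : ι) → Ω → S i) {A : Finset ι} {j : ι} (hj : j ∉ A) :
    totalCorrelation p Z (insert j A)
      = totalCorrelation p Z A + mutualInfo p (Z j) (tupleOn Z A) := by
  rw [totalCorrelation, totalCorrelation, mutualInfo, Finset.sum_insert hj,
    entropy_tupleOn_insert Z A j]
  ring

theorem totalCorrelation_nonneg (hp0 : ∀ ω, 0 ≤ p ω) (hp1 : ∑ ω, p ω = 1)
    (Z : (i : ι) → Ω → S i) (A : Finset ι) : 0 ≤ totalCorrelation p Z A := by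
  induction A using Finset.induction_on with
  | empty => rw [totalCorrelation_empty hp1]
  | insert j A hj ih =>
    rw [totalCorrelation_insert Z hj]
    exact add_nonneg ih (mutualInfo_nonneg hp0 hp1 _ _)

theorem totalCorrelation_comp_le (hp0 : ∀ ω, 0 ≤ p ω) (hp1 : ∑ ω, p ω = 1)
    (Z : (i : ι) → Ω → S i) (f : (i : ι) → S i → T i) (A : Finset ι) :
    totalCorrelation p (fun i ω => f i (Z i ω)) A ≤ totalCorrelation p Z A := by
  induction A using Finset.induction_on with
  | empty => rw [totalCorrelation_empty hp1, totalCorrelation_empty hp1]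
  | insert j A hj ih =>
    rw [totalCorrelation_insert _ hj, totalCorrelation_insert Z hj]
    have hI := mutualInfo_comp_le hp0 hp1 (Z j) (tupleOn Z A) (f j)
      fun (t : (i : A) → S i) i => f i.1 (t i)
    exact add_le_add ih hI

end TotalCorrelation

/-- Mutual independence of the `Z i` is encoded by the identity `H(Z_{[b]}) = Σ_i H(Z_i)`. -/
theorem min_subset_entropy_le_of_indep
    {Ω : Type*} [Fintype Ω] {b : ℕ} {S T : Fin b → Type*}
    (p : Ω → ℝ) (hp0 : ∀ ω, 0 ≤ p ω) (hp1 : ∑ ω, p ω = 1)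
    (Z : (i : Fin b) → Ω → S i) (f : (i : Fin b) → S i → T i)
    (hindep : entropy p (tupleOn Z Finset.univ) = ∑ i, entropy p (Z i))
    (a : ℕ) (ha : a ≤ b) :
    ((Finset.univ : Finset (Fin b)).powersetCard a).inf'
        (by rw [Finset.powersetCard_nonempty]; simpa using ha)
        (fun A => entropy p (tupleOn (fun i ω => f i (Z i ω)) A))
      ≤ (a / b : ℝ) * entropy p (tupleOn (fun i ω => f i (Z i ω)) Finset.univ) := by
  set W : (i : Fin b) → Ω → T i := fun i ω => f i (Z i ω)
  have hW : ∑ i, entropy p (W i) ≤ entropy p (tupleOn W Finset.univ) := by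
    have := totalCorrelation_comp_le hp0 hp1 Z f Finset.univ
    rw [totalCorrelation, totalCorrelation, hindep, sub_self] at this
    exact sub_nonpos.1 this
  obtain ⟨A, hA, hsum⟩ := Finset.univ.exists_mem_powersetCard_sum_le (fun i => entropy p (W i))
    (a := a) (by simpa using ha)
  rw [Finset.card_univ, Fintype.card_fin] at hsum
  calc _ ≤ entropy p (tupleOn W A) := Finset.inf'_le _ hA
    _ ≤ ∑ i ∈ A, entropy p (W i) := sub_nonneg.1 (totalCorrelation_nonneg hp0 hp1 W A)
    _ ≤ a / b * ∑ i, entropy p (W i) := hsum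
    _ ≤ a / b * entropy p (tupleOn W Finset.univ) := by gcongr
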